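/- Let p be an odd prime number and let G be a group of order p^5 generated by f1, f2, f0, h1, h2 with Z(G) = ⟨h1, h2⟩ and relations [f1,f2] = f0, [f0,f1] = h1, [f0,f2] = h2, f0^p = h1^p = h2^p = 1, and such that f1^p ∈ ⟨h1, h2⟩ and f2^p ∈ ⟨h1, h2⟩ (i.e., G belongs to the isoclinism family Φ_6). Then B_0(G) = 0. -/

import Mathlib

/-- The coefficient group `ℚ/ℤ`. -/
abbrev QZ : Type := ℚ ⧸ AddSubgroup.zmultiples (1 : ℚ)

/-- A (inhomogeneous) 2-cocycle on `G` with values in `ℚ/ℤ` (trivial action). -/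
def IsGrpCocycle {G : Type*} [Group G] (f : G → G → QZ) : Prop :=
  ∀ g h k : G, f g h + f (g * h) k = f h k + f g (h * k)

/-- A 2-coboundary on `G` with values in `ℚ/ℤ` (trivial action). -/
def IsGrpCoboundary {G : Type*} [Group G] (f : G → G → QZ) : Prop :=
  ∃ c : G → QZ, ∀ g h : G, f g h = c g + c h - c (g * h)

/-- The additive group of 2-cocycles. -/
def cocycles2 (G : Type*) [Group G] : AddSubgroup (G → G → QZ) where
  carrier := {f | IsGrpCocycle f}
  zero_mem' := by intro g h k; simp
  add_mem' := by
    intro a b ha hb g h k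
    simp only [Pi.add_apply]
    rw [add_add_add_comm, ha g h k, hb g h k, add_add_add_comm]
  neg_mem' := by
    intro a ha g h k
    simp only [Pi.neg_apply, ← neg_add]
    rw [ha g h k]

/-- The subgroup of 2-coboundaries inside the group of 2-cocycles. -/
def coboundaries2 (G : Type*) [Group G] : AddSubgroup (cocycles2 G) where
  carrier := {f | IsGrpCoboundary (f : G → G → QZ)}
  zero_mem' := ⟨0, by intro g h; simp⟩
  add_mem' := by
    rintro a b ⟨c, hc⟩ ⟨d, hd⟩
    refine ⟨c + d, fun g h => ?_⟩
    have : ((a + b : cocycles2 G) : G → G → QZ) g h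
        = (a : G → G → QZ) g h + (b : G → G → QZ) g h := rfl
    rw [this, hc g h, hd g h]
    simp only [Pi.add_apply]
    abel
  neg_mem' := by
    rintro a ⟨c, hc⟩
    refine ⟨-c, fun g h => ?_⟩
    have : ((-a : cocycles2 G) : G → G → QZ) g h = -((a : G → G → QZ) g h) := rfl
    rw [this, hc g h]
    simp only [Pi.neg_apply]
    abel

/-- The second cohomology group `H²(G, ℚ/ℤ)` (trivial action), as cocycles mod coboundaries. -/
abbrev H2 (G : Type*) [Group G] : Type _ := cocycles2 G ⧸ coboundaries2 G

/-- A group is bicyclic if it is cyclic or the direct product of two cyclic groups. -/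
def IsBicyclic (A : Type*) [Group A] : Prop :=
  IsCyclic A ∨ ∃ B C : Subgroup A, IsCyclic B ∧ IsCyclic C ∧ Nonempty (A ≃* B × C)

/-- The restriction of `f` to every bicyclic subgroup is a coboundary. -/
def RestrictsToCoboundaries {G : Type*} [Group G] (f : G → G → QZ) : Prop :=
  ∀ A : Subgroup G, IsBicyclic A → IsGrpCoboundary (fun a b : A => f a b)

/-- The Bogomolov multiplier `B₀(G)`: the subgroup of `H²(G, ℚ/ℤ)` consisting of the classes
whose restriction to every bicyclic subgroup of `G` vanishes. -/
def B0 (G : Type*) [Group G] : AddSubgroup (H2 G) where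
  carrier := {x | ∃ f : cocycles2 G,
    (QuotientAddGroup.mk f : H2 G) = x ∧ RestrictsToCoboundaries (f : G → G → QZ)}
  zero_mem' := by
    refine ⟨0, rfl, fun A _ => ⟨0, fun a b => ?_⟩⟩
    simp
  add_mem' := by
    rintro x y ⟨f, rfl, hf⟩ ⟨g, rfl, hg⟩
    refine ⟨f + g, rfl, fun A hA => ?_⟩
    obtain ⟨c, hc⟩ := hf A hA
    obtain ⟨d, hd⟩ := hg A hA
    refine ⟨c + d, fun a b => ?_⟩
    have hc' : (f : G → G → QZ) (a : G) (b : G) = c a + c b - c (a * b) := hc a b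
    have hd' : (g : G → G → QZ) (a : G) (b : G) = d a + d b - d (a * b) := hd a b
    show ((f + g : cocycles2 G) : G → G → QZ) (a : G) (b : G)
        = (c + d) a + (c + d) b - (c + d) (a * b)
    have : ((f + g : cocycles2 G) : G → G → QZ) (a : G) (b : G)
        = (f : G → G → QZ) (a : G) (b : G) + (g : G → G → QZ) (a : G) (b : G) := rfl
    rw [this, hc', hd']
    simp only [Pi.add_apply]
    abel
  neg_mem' := by
    rintro x ⟨f, rfl, hf⟩
    refine ⟨-f, rfl, fun A hA => ?_⟩
    obtain ⟨c, hc⟩ := hf A hA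
    refine ⟨-c, fun a b => ?_⟩
    have hc' : (f : G → G → QZ) (a : G) (b : G) = c a + c b - c (a * b) := hc a b
    show ((-f : cocycles2 G) : G → G → QZ) (a : G) (b : G)
        = (-c) a + (-c) b - (-c) (a * b)
    have : ((-f : cocycles2 G) : G → G → QZ) (a : G) (b : G)
        = -((f : G → G → QZ) (a : G) (b : G)) := rfl
    rw [this, hc']
    simp only [Pi.neg_apply]
    abel

/-- The commutator `[g,h] = g⁻¹h⁻¹gh`. -/
def cmt {G : Type*} [Group G] (g h : G) : G := g⁻¹ * h⁻¹ * g * h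

/-!
Let `f` be a cocycle whose class lies in `B₀(G)` and let `E` be the central extension of `G` by
`ℚ/ℤ` that it defines. The centre of `G` has exponent `p`, so for central `z` the subgroup
`⟨z, y⟩` is bicyclic; hence `f(z, y) = f(y, z)` and every lift of a central element of `G` is
central in `E`. Lifting `f1, f2` to `s1, s2 ∈ E` and putting `s0 = [s1, s2]`, `z1 = [s0, s1]`,
`z2 = [s0, s2]`, the elements `z1, z2` are central, `z1 ^ p = z2 ^ p = 1` because `s0 ^ p` lies in
the kernel, and `s0 ^ p = 1` because `1 = [s1, s2 ^ p] = s0 ^ p z2 ^ (p choose 2)` with `p` odd.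
Since `ℚ/ℤ` is divisible the lifts can be chosen with `s1 ^ p, s2 ^ p ∈ ⟨z1, z2⟩`. These relations
bound the order of `⟨s1, s2, s0, z1, z2⟩` by `p ^ 5 = |G|`; as it maps onto `G`, it is the image
of a splitting of `E → G`, so `f` is a coboundary.
-/

open Subgroup

section GroupTheory

variable {Γ : Type*} [Group Γ]

lemma cmt_eq_one_of_commute {x y : Γ} (h : Commute x y) : cmt x y = 1 := by
  rw [cmt, mul_assoc _ x, h.eq]
  group

lemma cmt_eq_one_of_mem_center_left {z : Γ} (hz : z ∈ center Γ) (x : Γ) : cmt z x = 1 :=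
  cmt_eq_one_of_commute (mem_center_iff.mp hz x).symm

lemma cmt_swap (x y : Γ) : cmt y x = (cmt x y)⁻¹ := by
  simp only [cmt]
  group

lemma inv_mul_mul_eq_mul_cmt (g x : Γ) : x⁻¹ * g * x = g * cmt g x := by
  rw [cmt]
  group

lemma cmt_mul_left_of_mem_center {c : Γ} (hc : c ∈ center Γ) (x y : Γ) :
    cmt (c * x) y = cmt x y := by
  have hcy : y⁻¹ * c = c * y⁻¹ := mem_center_iff.mp hc y⁻¹
  calc cmt (c * x) y = x⁻¹ * c⁻¹ * (y⁻¹ * c) * x * y := by simp only [cmt]; group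
    _ = cmt x y := by rw [hcy, cmt]; group

lemma cmt_mul_right_of_mem_center {c : Γ} (hc : c ∈ center Γ) (x y : Γ) :
    cmt x (c * y) = cmt x y := by
  rw [cmt_swap, cmt_mul_left_of_mem_center hc, ← cmt_swap]

lemma map_cmt {Δ : Type*} [Group Δ] (φ : Γ →* Δ) (x y : Γ) :
    φ (cmt x y) = cmt (φ x) (φ y) := by
  simp [cmt]

lemma inv_mul_pow_mul (y a : Γ) (n : ℕ) : y⁻¹ * a ^ n * y = (y⁻¹ * a * y) ^ n := by
  simpa using (conj_pow (a := y⁻¹) (b := a) (i := n)).symm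

lemma cmt_pow_left {x y : Γ} (h : Commute x (cmt x y)) (n : ℕ) :
    cmt (x ^ n) y = cmt x y ^ n := by
  calc cmt (x ^ n) y = (x ^ n)⁻¹ * (y⁻¹ * x ^ n * y) := by simp only [cmt, mul_assoc]
    _ = (x ^ n)⁻¹ * (x ^ n * cmt x y ^ n) := by
      rw [inv_mul_pow_mul, inv_mul_mul_eq_mul_cmt, h.mul_pow]
    _ = cmt x y ^ n := by group

lemma cmt_pow_right {x y : Γ} (hcd : Commute (cmt x y) (cmt (cmt x y) y))
    (hdy : Commute (cmt (cmt x y) y) y) (n : ℕ) :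
    cmt x (y ^ n) = cmt x y ^ n * cmt (cmt x y) y ^ n.choose 2 := by
  set c := cmt x y
  set d := cmt c y
  have hd : y⁻¹ * d * y = d := by rw [mul_assoc, hdy.eq]; group
  have hconj : (y ^ n)⁻¹ * x * y ^ n = x * c ^ n * d ^ n.choose 2 := by
    induction n with
    | zero => simp
    | succ n ih =>
      calc (y ^ (n + 1))⁻¹ * x * y ^ (n + 1)
          = y⁻¹ * ((y ^ n)⁻¹ * x * y ^ n) * y := by rw [pow_succ]; group
        _ = (y⁻¹ * x * y) * (y⁻¹ * c ^ n * y) * (y⁻¹ * d ^ n.choose 2 * y) := by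
            rw [ih]; group
        _ = x * c * (c * d) ^ n * d ^ n.choose 2 := by
            rw [inv_mul_pow_mul, inv_mul_pow_mul, hd, inv_mul_mul_eq_mul_cmt,
              inv_mul_mul_eq_mul_cmt c]
        _ = x * c ^ (n + 1) * d ^ (n + 1).choose 2 := by
            rw [hcd.mul_pow, Nat.choose_succ_succ', Nat.choose_one_right, pow_add d, pow_succ']
            group
  calc cmt x (y ^ n) = x⁻¹ * ((y ^ n)⁻¹ * x * y ^ n) := by simp only [cmt, mul_assoc]
    _ = c ^ n * d ^ n.choose 2 := by rw [hconj]; group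

theorem cmt_pow_eq_one_of_odd {p : ℕ} (hp : p.Prime) (hodd : Odd p) {x y : Γ}
    (hcd : Commute (cmt x y) (cmt (cmt x y) y)) (hdy : Commute (cmt (cmt x y) y) y)
    (hd : cmt (cmt x y) y ^ p = 1) (hxy : Commute x (y ^ p)) : cmt x y ^ p = 1 := by
  have hp2 : 2 < p := by
    obtain ⟨k, rfl⟩ := hodd
    have := hp.two_le
    omega
  obtain ⟨k, hk⟩ := hp.dvd_choose_self two_ne_zero hp2
  have h := cmt_pow_right hcd hdy p
  rwa [cmt_eq_one_of_commute hxy, hk, pow_mul, hd, one_pow, mul_one, eq_comm] at h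

lemma pow_eq_one_of_mem_closure {S : Set Γ} (hS : S ⊆ center Γ) {n : ℕ}
    (hSn : ∀ s ∈ S, s ^ n = 1) {z : Γ} (hz : z ∈ closure S) : z ^ n = 1 := by
  have hcomm : ∀ x ∈ closure S, ∀ y, Commute x y := fun x hx y =>
    (mem_center_iff.mp ((closure_le _).mpr hS hx) y).symm
  induction hz using closure_induction with
  | mem x hx => exact hSn x hx
  | one => exact one_pow n
  | mul x y hx _ ihx ihy => rw [(hcomm x hx y).mul_pow, ihx, ihy, one_mul]
  | inv x _ ihx => rw [inv_pow, ihx, inv_one]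

lemma mem_normalizer_closure_of_cmt_mem {S : Set Γ} [Finite (closure S)] {x : Γ}
    (h : ∀ g ∈ S, cmt g x ∈ closure S) : x ∈ normalizer (closure S : Set Γ) := by
  rw [← inv_mem_iff, mem_normalizer_iff_map_conj_eq]
  have hle : (closure S).map (MulAut.conj x⁻¹).toMonoidHom ≤ closure S := by
    rw [MonoidHom.map_closure, closure_le]
    rintro _ ⟨g, hg, rfl⟩
    simpa [← inv_mul_mul_eq_mul_cmt] using mul_mem (subset_closure hg) (h g hg)
  exact eq_of_le_of_card_ge hle (card_map_of_injective (MulAut.conj x⁻¹).injective).ge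

lemma card_closure_insert_le {S : Set Γ} [Finite (closure S)] {x : Γ} {p : ℕ} (hp : p ≠ 0)
    (hcmt : ∀ g ∈ S, cmt g x ∈ closure S) (hpow : x ^ p ∈ closure S) :
    Finite (closure (insert x S)) ∧
      Nat.card (closure (insert x S)) ≤ p * Nat.card (closure S) := by
  have hsub : (closure (insert x S) : Set Γ) ⊆
      Set.range (fun i : Fin p × closure S => x ^ (i.1 : ℕ) * i.2) := by
    rw [Set.insert_eq, Subgroup.closure_union, ← zpowers_eq_closure,
      coe_mul_of_left_le_normalizer_right _ _
        (zpowers_le.mpr (mem_normalizer_closure_of_cmt_mem hcmt))]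
    rintro _ ⟨_, ⟨k, rfl⟩, n, hn, rfl⟩
    have hpz : (0 : ℤ) < p := by exact_mod_cast Nat.pos_of_ne_zero hp
    have hlt := Int.emod_lt_of_pos k hpz
    refine ⟨(⟨(k % p).toNat, by omega⟩,
      ⟨(x ^ p) ^ (k / p) * n, mul_mem (zpow_mem hpow _) hn⟩), ?_⟩
    dsimp only
    rw [← mul_assoc, ← zpow_natCast, Int.toNat_of_nonneg (Int.emod_nonneg k hpz.ne'),
      ← zpow_natCast x p, ← zpow_mul, ← zpow_add, Int.emod_add_mul_ediv]
  have hfin : (closure (insert x S) : Set Γ).Finite := (Set.finite_range _).subset hsub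
  refine ⟨hfin.to_subtype, ?_⟩
  calc Nat.card (closure (insert x S))
      ≤ Nat.card (Set.range _) := Nat.card_mono (Set.finite_range _) hsub
    _ ≤ Nat.card (Fin p × closure S) := Finite.card_range_le _
    _ = p * Nat.card (closure S) := by simp

theorem pow_eq_one_of_phi6_relations {p : ℕ} (hp : p.Prime) (hodd : Odd p)
    {s1 s2 s0 z1 z2 : Γ} (hz1 : z1 ∈ center Γ) (hz2 : z2 ∈ center Γ)
    (h12 : cmt s1 s2 = s0) (h01 : cmt s0 s1 = z1) (h02 : cmt s0 s2 = z2)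
    (hs0p : s0 ^ p ∈ center Γ) (hs2p : s2 ^ p ∈ center Γ) :
    z1 ^ p = 1 ∧ z2 ^ p = 1 ∧ s0 ^ p = 1 := by
  have hz1p : z1 ^ p = 1 := by
    rw [← h01, ← cmt_pow_left (mem_center_iff.mp (h01 ▸ hz1) s0),
      cmt_eq_one_of_mem_center_left hs0p]
  have hz2p : z2 ^ p = 1 := by
    rw [← h02, ← cmt_pow_left (mem_center_iff.mp (h02 ▸ hz2) s0),
      cmt_eq_one_of_mem_center_left hs0p]
  refine ⟨hz1p, hz2p, ?_⟩
  rw [← h12]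
  refine cmt_pow_eq_one_of_odd hp hodd ?_ ?_ ?_ (mem_center_iff.mp hs2p s1) <;> rw [h12, h02]
  exacts [mem_center_iff.mp hz2 s0, (mem_center_iff.mp hz2 s2).symm, hz2p]

theorem card_closure_le_of_phi6_relations {p : ℕ} (hp : p.Prime) (hodd : Odd p)
    {s1 s2 s0 z1 z2 : Γ} (hz1 : z1 ∈ center Γ) (hz2 : z2 ∈ center Γ)
    (h12 : cmt s1 s2 = s0) (h01 : cmt s0 s1 = z1) (h02 : cmt s0 s2 = z2)
    (hs0p : s0 ^ p ∈ center Γ) (hs1p : s1 ^ p ∈ closure {z1, z2})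
    (hs2p : s2 ^ p ∈ closure {z1, z2}) :
    Finite (closure {s1, s2, s0, z1, z2}) ∧ Nat.card (closure {s1, s2, s0, z1, z2}) ≤ p ^ 5 := by
  have hZ : closure {z1, z2} ≤ center Γ :=
    (closure_le _).mpr (by simp [Set.insert_subset_iff, hz1, hz2])
  obtain ⟨hz1p, hz2p, hs0p⟩ :=
    pow_eq_one_of_phi6_relations hp hodd hz1 hz2 h12 h01 h02 hs0p (hZ hs2p)
  have hfin0 : Finite (closure (∅ : Set Γ)) := by rw [Subgroup.closure_empty]; infer_instance
  obtain ⟨hfin1, hcard1⟩ :=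
    card_closure_insert_le (S := ∅) (x := z2) hp.ne_zero (by simp) (by simp [hz2p])
  rw [LawfulSingleton.insert_empty_eq] at hfin1 hcard1
  obtain ⟨hfin2, hcard2⟩ := card_closure_insert_le (S := {z2}) (x := z1) hp.ne_zero
    (by simp [cmt_eq_one_of_mem_center_left hz2]) (by simp [hz1p])
  obtain ⟨hfin3, hcard3⟩ := card_closure_insert_le (S := {z1, z2}) (x := s0) hp.ne_zero
    (by simp [cmt_eq_one_of_mem_center_left hz1, cmt_eq_one_of_mem_center_left hz2])
    (by simp [hs0p])
  obtain ⟨hfin4, hcard4⟩ := card_closure_insert_le (S := {s0, z1, z2}) (x := s2) hp.ne_zero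
    (by simp [h02, cmt_eq_one_of_mem_center_left hz1, cmt_eq_one_of_mem_center_left hz2,
      mem_closure_of_mem])
    (closure_mono (Set.subset_insert _ _) hs2p)
  obtain ⟨hfin5, hcard5⟩ := card_closure_insert_le (S := {s2, s0, z1, z2}) (x := s1) hp.ne_zero
    (by simp [cmt_swap s1 s2, h12, h01, cmt_eq_one_of_mem_center_left hz1,
      cmt_eq_one_of_mem_center_left hz2, mem_closure_of_mem])
    (closure_mono ((Set.subset_insert _ _).trans (Set.subset_insert _ _)) hs1p)
  refine ⟨hfin5, hcard5.trans ?_⟩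
  have := Nat.mul_le_mul_left p (hcard4.trans (Nat.mul_le_mul_left p (hcard3.trans
    (Nat.mul_le_mul_left p (hcard2.trans (Nat.mul_le_mul_left p hcard1))))))
  simpa [pow_succ, mul_assoc] using this

lemma mem_zpowers_of_mem_zpowers_of_ne_one {p : ℕ} (hp : p.Prime) {z w : Γ} (hz : z ^ p = 1)
    (hw : w ∈ zpowers z) (hw1 : w ≠ 1) : z ∈ zpowers w := by
  have hz1 : z ≠ 1 := by
    rintro rfl
    simp_all
  have : Fact p.Prime := ⟨hp⟩
  have hoz : orderOf z = p := orderOf_eq_prime hz hz1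
  have how : orderOf w = p :=
    ((Nat.dvd_prime hp).mp (hoz ▸ orderOf_dvd_of_mem_zpowers hw)).resolve_left
      (mt orderOf_eq_one_iff.mp hw1)
  have : Finite (zpowers z) :=
    Nat.finite_of_card_ne_zero (by rw [Nat.card_zpowers, hoz]; exact hp.ne_zero)
  rw [eq_of_le_of_card_ge (zpowers_le.mpr hw)
    (by rw [Nat.card_zpowers, Nat.card_zpowers, hoz, how])]
  exact mem_zpowers z

theorem isBicyclic_closure_pair {p : ℕ} (hp : p.Prime) {z y : Γ} (hzy : Commute z y)
    (hz : z ^ p = 1) : IsBicyclic (closure {z, y}) := by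
  by_cases hmem : z ∈ zpowers y
  · left
    have hcyc : closure ({z, y} : Set Γ) = zpowers y :=
      le_antisymm ((closure_le _).mpr (by simp [Set.insert_subset_iff, hmem, mem_zpowers]))
        (zpowers_le.mpr (subset_closure (Set.mem_insert_of_mem _ rfl)))
    rw [hcyc]
    infer_instance
  · right
    let a : closure {z, y} := ⟨z, subset_closure (by simp)⟩
    let b : closure {z, y} := ⟨y, subset_closure (by simp)⟩
    let φ := (zpowers a).subtype.noncommCoprod (zpowers b).subtype fun ⟨_, k, hk⟩ ⟨_, l, hl⟩ =>
      hk ▸ hl ▸ (Commute.zpow_zpow (Subtype.ext hzy : Commute a b) k l)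
    have hdisj : Disjoint (zpowers a) (zpowers b) := by
      rw [disjoint_def]
      intro w hwa hwb
      by_contra hw1
      obtain ⟨k, rfl⟩ := mem_zpowers_iff.mp hwa
      obtain ⟨l, hl⟩ := mem_zpowers_iff.mp hwb
      have hwy : z ^ k ∈ zpowers y := ⟨l, congrArg Subtype.val hl⟩
      exact hmem (zpowers_le.mpr hwy (mem_zpowers_of_mem_zpowers_of_ne_one hp hz ⟨k, rfl⟩
        (fun h => hw1 (Subtype.ext h))))
    have hinj : Function.Injective φ := (MonoidHom.noncommCoprod_injective _ _ _).mpr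
      ⟨subtype_injective _, subtype_injective _, by rwa [range_subtype, range_subtype]⟩
    have hsurj : Function.Surjective φ := by
      rw [← MonoidHom.range_eq_top, MonoidHom.noncommCoprod_range, range_subtype, range_subtype,
        zpowers_eq_closure, zpowers_eq_closure, ← Subgroup.closure_union, Set.singleton_union,
        ← closure_closure_coe_preimage]
      congr 1
      ext ⟨w, hw⟩
      simp [a, b]
    exact ⟨zpowers a, zpowers b, inferInstance, inferInstance,
      ⟨(MulEquiv.ofBijective φ ⟨hinj, hsurj⟩).symm⟩⟩

end GroupTheory

section Cocycle

variable {G : Type*} [Group G] {f : G → G → QZ}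

lemma IsGrpCocycle.apply_one_left (hf : IsGrpCocycle f) (g : G) : f 1 g = f 1 1 := by
  have h := hf 1 1 g
  rw [one_mul, one_mul] at h
  exact (add_right_cancel h).symm

lemma IsGrpCocycle.apply_one_right (hf : IsGrpCocycle f) (g : G) : f g 1 = f 1 1 := by
  have h := hf g 1 1
  rw [mul_one, mul_one] at h
  exact add_right_cancel h

lemma RestrictsToCoboundaries.apply_comm (hf : RestrictsToCoboundaries f) {z y : G}
    (hzy : Commute z y) (hA : IsBicyclic (closure {z, y})) : f z y = f y z := by
  obtain ⟨c, hc⟩ := hf _ hA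
  let a : closure {z, y} := ⟨z, subset_closure (by simp)⟩
  let b : closure {z, y} := ⟨y, subset_closure (by simp)⟩
  have hab : f z y = c a + c b - c (a * b) := hc a b
  have hba : f y z = c b + c a - c (b * a) := hc b a
  rw [hab, hba, show a * b = b * a from Subtype.ext hzy, add_comm (c a)]

end Cocycle

lemma QZ.exists_nsmul_eq {n : ℕ} (hn : n ≠ 0) (v : QZ) : ∃ t : QZ, n • t = v := by
  obtain ⟨q, rfl⟩ := QuotientAddGroup.mk_surjective v
  refine ⟨((q / n : ℚ) : QZ), ?_⟩
  rw [← QuotientAddGroup.mk_nsmul, nsmul_eq_mul, mul_div_cancel₀ _ (by exact_mod_cast hn)]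

/-- The extension of `G` by `ℚ/ℤ` of class `[f]`. Its product uses the normalized cocycle
`f - f 1 1`, so that `⟨0, 1⟩` is the identity. -/
@[ext]
structure CocycleExt {G : Type*} [Group G] (f : cocycles2 G) where
  coeff : QZ
  base : G

namespace CocycleExt

variable {G : Type*} [Group G] {f : cocycles2 G}

instance : Mul (CocycleExt f) :=
  ⟨fun x y => ⟨x.coeff + y.coeff + f.1 x.base y.base - f.1 1 1, x.base * y.base⟩⟩

instance : One (CocycleExt f) := ⟨⟨0, 1⟩⟩

instance : Inv (CocycleExt f) :=
  ⟨fun x => ⟨-x.coeff - f.1 x.base⁻¹ x.base + f.1 1 1, x.base⁻¹⟩⟩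

@[simp] lemma coeff_mul (x y : CocycleExt f) :
    (x * y).coeff = x.coeff + y.coeff + f.1 x.base y.base - f.1 1 1 := rfl

@[simp] lemma base_mul (x y : CocycleExt f) : (x * y).base = x.base * y.base := rfl

@[simp] lemma coeff_one : (1 : CocycleExt f).coeff = 0 := rfl

@[simp] lemma base_one : (1 : CocycleExt f).base = 1 := rfl

instance : Group (CocycleExt f) := Group.ofLeftAxioms
  (fun x y z => by
    ext
    · have h := f.2 x.base y.base z.base
      simp only [coeff_mul, base_mul]
      linear_combination (norm := abel) h
    · exact mul_assoc _ _ _)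
  (fun x => by ext <;> simp [f.2.apply_one_left])
  (fun x => by
    ext
    · show -x.coeff - f.1 x.base⁻¹ x.base + f.1 1 1 + x.coeff + f.1 x.base⁻¹ x.base - f.1 1 1 = 0
      abel
    · exact inv_mul_cancel x.base)

def proj : CocycleExt f →* G where
  toFun := base
  map_one' := rfl
  map_mul' _ _ := rfl

@[simp] lemma proj_apply (x : CocycleExt f) : proj x = x.base := rfl

@[simp] lemma base_pow (x : CocycleExt f) (n : ℕ) : (x ^ n).base = x.base ^ n := map_pow proj x n

lemma base_cmt (x y : CocycleExt f) : (cmt x y).base = cmt x.base y.base := map_cmt proj x y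

lemma mem_center_of_base_mem_center {x : CocycleExt f} (hx : x.base ∈ center G)
    (hsymm : ∀ y, f.1 x.base y = f.1 y x.base) : x ∈ center (CocycleExt f) := by
  refine mem_center_iff.mpr fun y => ?_
  ext
  · simp only [coeff_mul, hsymm]
    abel
  · exact mem_center_iff.mp hx y.base

lemma mem_center_of_base_eq_one {x : CocycleExt f} (hx : x.base = 1) :
    x ∈ center (CocycleExt f) :=
  mem_center_of_base_mem_center (hx ▸ one_mem _)
    (fun y => hx ▸ (f.2.apply_one_left y).trans (f.2.apply_one_right y).symm)

lemma cmt_eq_of_base_eq {x x' y y' : CocycleExt f} (hx : x.base = x'.base)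
    (hy : y.base = y'.base) : cmt x y = cmt x' y' := by
  have hcx : x * x'⁻¹ ∈ center (CocycleExt f) := mem_center_of_base_eq_one (by
    rw [← proj_apply, map_mul, map_inv, proj_apply, proj_apply, hx, mul_inv_cancel])
  have hcy : y * y'⁻¹ ∈ center (CocycleExt f) := mem_center_of_base_eq_one (by
    rw [← proj_apply, map_mul, map_inv, proj_apply, proj_apply, hy, mul_inv_cancel])
  calc cmt x y = cmt (x * x'⁻¹ * x') (y * y'⁻¹ * y') := by
        rw [inv_mul_cancel_right, inv_mul_cancel_right]
    _ = cmt x' y' := by rw [cmt_mul_left_of_mem_center hcx, cmt_mul_right_of_mem_center hcy]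

lemma mk_one_pow (t : QZ) (n : ℕ) : (⟨t, 1⟩ : CocycleExt f) ^ n = ⟨n • t, 1⟩ := by
  induction n with
  | zero => ext <;> simp
  | succ n ih => ext <;> simp [pow_succ, ih, succ_nsmul]

lemma exists_mk_pow_eq {n : ℕ} (hn : n ≠ 0) (g : G) (w : CocycleExt f) (hw : w.base = g ^ n) :
    ∃ t : QZ, (⟨t, g⟩ : CocycleExt f) ^ n = w := by
  obtain ⟨t, ht⟩ := QZ.exists_nsmul_eq hn (w.coeff - ((⟨0, g⟩ : CocycleExt f) ^ n).coeff)
  have hsplit : (⟨t, g⟩ : CocycleExt f) = ⟨t, 1⟩ * ⟨0, g⟩ := by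
    ext <;> simp [f.2.apply_one_left]
  have hcomm : Commute (⟨t, 1⟩ : CocycleExt f) ⟨0, g⟩ :=
    (mem_center_iff.mp (mem_center_of_base_eq_one rfl) _).symm
  refine ⟨t, ?_⟩
  rw [hsplit, hcomm.mul_pow, mk_one_pow]
  ext
  · simp [ht, f.2.apply_one_left]
  · simp [hw]

lemma isGrpCoboundary_of_section (s : G →* CocycleExt f) (hs : ∀ g, (s g).base = g) :
    IsGrpCoboundary f.1 := by
  refine ⟨fun g => f.1 1 1 - (s g).coeff, fun g h => ?_⟩
  have hmul := congrArg coeff (map_mul s g h)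
  simp only [coeff_mul, hs] at hmul
  dsimp only
  rw [hmul]
  abel

lemma isGrpCoboundary_of_card_le (U : Subgroup (CocycleExt f)) [Finite U]
    (hU : U.map proj = ⊤) (hcard : Nat.card U ≤ Nat.card G) : IsGrpCoboundary f.1 := by
  have hsurj : Function.Surjective (proj.comp U.subtype) := by
    rwa [← MonoidHom.range_eq_top, ← MonoidHom.map_range, range_subtype]
  have hbij : Function.Bijective (proj.comp U.subtype) :=
    (Nat.bijective_iff_surjective_and_card _).mpr
      ⟨hsurj, hcard.antisymm (Nat.card_le_card_of_surjective _ hsurj)⟩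
  let e := MulEquiv.ofBijective _ hbij
  exact isGrpCoboundary_of_section (U.subtype.comp e.symm.toMonoidHom) e.apply_symm_apply

theorem exists_subgroup_card_le_of_phi6 {p : ℕ} (hp : p.Prime) (hodd : Odd p)
    {f1 f2 f0 h1 h2 : G} (hgen : closure {f1, f2, f0, h1, h2} = ⊤)
    (hcen : closure {h1, h2} = center G)
    (r1 : cmt f1 f2 = f0) (r2 : cmt f0 f1 = h1) (r3 : cmt f0 f2 = h2) (r4 : f0 ^ p = 1)
    (r7 : f1 ^ p ∈ closure ({h1, h2} : Set G)) (r8 : f2 ^ p ∈ closure ({h1, h2} : Set G))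
    (hsymm : ∀ z ∈ center G, ∀ y, f.1 z y = f.1 y z) :
    ∃ U : Subgroup (CocycleExt f), Finite U ∧ Nat.card U ≤ p ^ 5 ∧ U.map proj = ⊤ := by
  have hcentral : ∀ x : CocycleExt f, x.base ∈ center G → x ∈ center (CocycleExt f) :=
    fun x hx => mem_center_of_base_mem_center hx (hsymm _ hx)
  set s0 := cmt (⟨0, f1⟩ : CocycleExt f) ⟨0, f2⟩
  set z1 := cmt s0 ⟨0, f1⟩
  set z2 := cmt s0 ⟨0, f2⟩
  have hz1b : z1.base = h1 := by simp [z1, s0, base_cmt, r1, r2]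
  have hz2b : z2.base = h2 := by simp [z2, s0, base_cmt, r1, r3]
  have hZmap : (closure {z1, z2}).map proj = closure {h1, h2} := by
    rw [MonoidHom.map_closure, Set.image_pair, proj_apply, proj_apply, hz1b, hz2b]
  obtain ⟨w1, hw1, hw1b⟩ := mem_map.mp (hZmap ▸ r7)
  obtain ⟨w2, hw2, hw2b⟩ := mem_map.mp (hZmap ▸ r8)
  obtain ⟨t1, hs1p⟩ := exists_mk_pow_eq hp.ne_zero f1 w1 hw1b
  obtain ⟨t2, hs2p⟩ := exists_mk_pow_eq hp.ne_zero f2 w2 hw2b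
  obtain ⟨hfin, hcard⟩ := card_closure_le_of_phi6_relations (s1 := ⟨t1, f1⟩) (s2 := ⟨t2, f2⟩)
    (s0 := s0) (z1 := z1) (z2 := z2) hp hodd (hcentral _ (hz1b ▸ hcen ▸ subset_closure (by simp)))
    (hcentral _ (hz2b ▸ hcen ▸ subset_closure (by simp)))
    (cmt_eq_of_base_eq rfl rfl) (cmt_eq_of_base_eq rfl rfl) (cmt_eq_of_base_eq rfl rfl)
    (hcentral _ (by simp [s0, base_cmt, r1, r4, one_mem])) (hs1p ▸ hw1) (hs2p ▸ hw2)
  refine ⟨_, hfin, hcard, ?_⟩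
  rw [MonoidHom.map_closure]
  simpa [Set.image_insert_eq, s0, base_cmt, r1, hz1b, hz2b] using hgen

end CocycleExt

theorem B0_phi6_eq_bot_general (p : ℕ) (hp : p.Prime) (hodd : Odd p)
    (G : Type) [Group G] (hcard : Nat.card G = p ^ 5)
    (f1 f2 f0 h1 h2 : G)
    (hgen : Subgroup.closure {f1, f2, f0, h1, h2} = ⊤)
    (hcen : Subgroup.closure {h1, h2} = Subgroup.center G)
    (r1 : cmt f1 f2 = f0) (r2 : cmt f0 f1 = h1) (r3 : cmt f0 f2 = h2)
    (r4 : f0 ^ p = 1) (r5 : h1 ^ p = 1) (r6 : h2 ^ p = 1)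
    (r7 : f1 ^ p ∈ Subgroup.closure ({h1, h2} : Set G))
    (r8 : f2 ^ p ∈ Subgroup.closure ({h1, h2} : Set G)) :
    B0 G = ⊥ := by
  rw [AddSubgroup.eq_bot_iff_forall]
  rintro _ ⟨F, rfl, hF⟩
  rw [QuotientAddGroup.eq_zero_iff]
  have hexp : ∀ z ∈ center G, z ^ p = 1 := fun z hz =>
    pow_eq_one_of_mem_closure (hcen ▸ subset_closure) (by simp [r5, r6]) (hcen ▸ hz)
  have hsymm : ∀ z ∈ center G, ∀ y, F.1 z y = F.1 y z := fun z hz y =>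
    have hzy : Commute z y := (mem_center_iff.mp hz y).symm
    hF.apply_comm hzy (isBicyclic_closure_pair hp hzy (hexp z hz))
  obtain ⟨U, hUfin, hUcard, hUmap⟩ :=
    CocycleExt.exists_subgroup_card_le_of_phi6 hp hodd hgen hcen r1 r2 r3 r4 r7 r8 hsymm
  exact CocycleExt.isGrpCoboundary_of_card_le U hUmap (hcard ▸ hUcard)

/-- Let `p` be an odd prime and `G` a group of order `p⁵` in the isoclinism family `Φ₆`:
generated by `f1, f2, f0, h1, h2` with `Z(G) = ⟨h1, h2⟩`, relations `[f1,f2] = f0`,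
`[f0,f1] = h1`, `[f0,f2] = h2`, `f0^p = h1^p = h2^p = 1`, and `f1^p, f2^p ∈ ⟨h1, h2⟩`.
Then `B₀(G) = 0`. -/
theorem B0_phi6_eq_bot (p : ℕ) (hp : p.Prime) (hodd : Odd p)
    (G : Type) [Group G] [Finite G] (hcard : Nat.card G = p ^ 5)
    (f1 f2 f0 h1 h2 : G)
    (hgen : Subgroup.closure {f1, f2, f0, h1, h2} = ⊤)
    (hcen : Subgroup.closure {h1, h2} = Subgroup.center G)
    (r1 : cmt f1 f2 = f0) (r2 : cmt f0 f1 = h1) (r3 : cmt f0 f2 = h2)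
    (r4 : f0 ^ p = 1) (r5 : h1 ^ p = 1) (r6 : h2 ^ p = 1)
    (r7 : f1 ^ p ∈ Subgroup.closure ({h1, h2} : Set G))
    (r8 : f2 ^ p ∈ Subgroup.closure ({h1, h2} : Set G)) :
    B0 G = ⊥ :=
  B0_phi6_eq_bot_general p hp hodd G hcard f1 f2 f0 h1 h2 hgen hcen r1 r2 r3 r4 r5 r6 r7 r8
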